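/- arXiv:1107.4234 — 3 statements merged into one kernel-verified Lean document; each statement's English description precedes it below -/
import Mathlib

section
/- With k ≠ 0 and β = k², define for a partition λ the energy E^{(k)}_λ = ∑_i ( λ_i² k^{-1} − (2i − 1) λ_i k ). Then under the substitution k → −k^{-1} and λ → λᵗ the energy is invariant: E^{(k)}_λ = E^{(-1/k)}_{λᵗ}. -/
/-!
Write `E = (∑ λᵢ²) / k - (∑ (2i - 1) λᵢ) k`. Both sums are sums over the cells `(i, j)` of the
Young diagram: `λᵢ² = ∑_{j ≤ λᵢ} (2j - 1)` and `λ'ⱼ² = ∑_{i ≤ λ'ⱼ} (2i - 1)`. Reading the diagram by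
columns instead of rows therefore exchanges the two sums, while `k ↦ -1/k` exchanges `1/k` and `-k`.
-/

open Finset

theorem sum_range_two_mul_add_one (n : ℕ) : ∑ i ∈ range n, (2 * (i : ℝ) + 1) = n ^ 2 := by
  induction n with
  | zero => simp
  | succ n ih => rw [sum_range_succ, ih]; push_cast; ring

theorem sum_Icc_two_mul_sub_one (m : ℕ) : ∑ j ∈ Icc 1 m, (2 * (j : ℝ) - 1) = m ^ 2 := by
  induction m with
  | zero => simp
  | succ m ih => rw [sum_Icc_succ_top (Nat.le_add_left 1 m), ih]; push_cast; ring

theorem Fin.sum_filter_val_lt {M : Type*} [AddCommMonoid M] {L n : ℕ} (hn : n ≤ L) (g : ℕ → M) :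
    ∑ i ∈ univ.filter (fun i : Fin L => (i : ℕ) < n), g i = ∑ i ∈ range n, g i := by
  rw [sum_filter, Fin.sum_univ_eq_sum_range (fun i => if i < n then g i else 0), ← sum_filter]
  congr 1
  ext i
  simp only [mem_filter, mem_range]
  omega

theorem Antitone.le_apply_iff_lt_card_filter {α : Type*} [LinearOrder α] {L : ℕ} {f : Fin L → α}
    (hf : Antitone f) (a : α) (i : Fin L) : a ≤ f i ↔ (i : ℕ) < #{i' | a ≤ f i'} := by
  constructor
  · intro hi
    have hsub : Iic i ⊆ ({i' | a ≤ f i'} : Finset (Fin L)) := fun i' hi' =>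
      mem_filter.2 ⟨mem_univ _, hi.trans (hf (mem_Iic.1 hi'))⟩
    simpa [Fin.card_Iic] using card_le_card hsub
  · intro hlt
    by_contra hi
    have hsub : ({i' | a ≤ f i'} : Finset (Fin L)) ⊆ Iio i := fun i' hi' =>
      mem_Iio.2 <| lt_of_not_ge fun hii' =>
        hi ((mem_filter.1 hi').2.trans (hf hii'))
    exact absurd (card_le_card hsub) (by simpa [Fin.card_Iio] using hlt)

theorem sum_Icc_sum_filter_le_eq {ι M : Type*} [Fintype ι] [AddCommMonoid M] {f : ι → ℕ} {m : ℕ}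
    (hm : ∀ i, f i ≤ m) (w : ι → ℕ → M) :
    ∑ j ∈ Icc 1 m, ∑ i with j ≤ f i, w i j = ∑ i, ∑ j ∈ Icc 1 (f i), w i j :=
  sum_comm' fun j i => by
    simp only [mem_Icc, mem_filter, mem_univ, true_and, and_true]
    exact ⟨fun h => ⟨h.1.1, h.2⟩, fun h => ⟨⟨h.1, h.2.trans (hm i)⟩, h.2⟩⟩

theorem sum_Icc_two_mul_sub_one_mul_card {ι : Type*} [Fintype ι] {f : ι → ℕ} {m : ℕ}
    (hm : ∀ i, f i ≤ m) :
    ∑ j ∈ Icc 1 m, (2 * (j : ℝ) - 1) * #{i | j ≤ f i} = ∑ i, (f i : ℝ) ^ 2 := by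
  calc ∑ j ∈ Icc 1 m, (2 * (j : ℝ) - 1) * #{i | j ≤ f i}
      = ∑ j ∈ Icc 1 m, ∑ i with j ≤ f i, (2 * (j : ℝ) - 1) := by
        simp only [sum_const, nsmul_eq_mul, mul_comm]
    _ = ∑ i, (f i : ℝ) ^ 2 := by
        simp only [sum_Icc_sum_filter_le_eq hm, sum_Icc_two_mul_sub_one]

theorem Antitone.sum_Icc_card_sq {L : ℕ} {f : Fin L → ℕ} (hf : Antitone f) {m : ℕ}
    (hm : ∀ i, f i ≤ m) :
    ∑ j ∈ Icc 1 m, (#{i | j ≤ f i} : ℝ) ^ 2 = ∑ i : Fin L, (2 * ((i : ℕ) : ℝ) + 1) * f i := by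
  have hrow (j : ℕ) : (#{i | j ≤ f i} : ℝ) ^ 2 = ∑ i with j ≤ f i, (2 * ((i : ℕ) : ℝ) + 1) := by
    -- `set` keeps `filter_congr` below from also rewriting the filter inside the card
    set c := #{i | j ≤ f i}
    have hcL : c ≤ L := (card_le_univ _).trans_eq (Fintype.card_fin L)
    rw [filter_congr fun i _ => hf.le_apply_iff_lt_card_filter j i,
      Fin.sum_filter_val_lt hcL fun n => 2 * (n : ℝ) + 1, sum_range_two_mul_add_one]
  simp only [hrow, sum_Icc_sum_filter_le_eq hm, sum_const, Nat.card_Icc, nsmul_eq_mul,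
    Nat.add_sub_cancel, mul_comm]

theorem stmt_3_general (L : ℕ) (hL : 0 < L) (f : Fin L → ℕ) (hanti : Antitone f)
    (k : ℝ) :
    ∑ i : Fin L, ((f i : ℝ) ^ 2 / k - (2 * ((i : ℕ) : ℝ) + 1) * (f i : ℝ) * k)
      = ∑ j ∈ Finset.Icc 1 (f ⟨0, hL⟩),
          ((((Finset.univ.filter (fun i : Fin L => j ≤ f i)).card : ℝ)) ^ 2 / (-1 / k)
            - (2 * (j : ℝ) - 1) * (((Finset.univ.filter (fun i : Fin L => j ≤ f i)).card : ℝ))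
              * (-1 / k)) := by
  have hm : ∀ i, f i ≤ f ⟨0, hL⟩ := fun i => hanti (Nat.zero_le _)
  calc _ = (∑ i, (f i : ℝ) ^ 2) / k - (∑ i : Fin L, (2 * ((i : ℕ) : ℝ) + 1) * f i) * k := by
        rw [sum_sub_distrib, sum_div, sum_mul]
    _ = (∑ j ∈ Icc 1 (f ⟨0, hL⟩), (2 * (j : ℝ) - 1) * #{i | j ≤ f i}) / k
          - (∑ j ∈ Icc 1 (f ⟨0, hL⟩), (#{i | j ≤ f i} : ℝ) ^ 2) * k := by
        rw [sum_Icc_two_mul_sub_one_mul_card hm, hanti.sum_Icc_card_sq hm]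
    _ = _ := by
        rw [sum_div, sum_mul, ← sum_sub_distrib]
        refine sum_congr rfl fun j _ => ?_
        simp only [neg_div, div_neg, one_div, div_inv_eq_mul, mul_neg]
        ring

theorem stmt_3 (L : ℕ) (hL : 0 < L) (f : Fin L → ℕ) (hanti : Antitone f)
    (hpos : ∀ i, 0 < f i) (k : ℝ) (hk : k ≠ 0) :
    ∑ i : Fin L, ((f i : ℝ) ^ 2 / k - (2 * ((i : ℕ) : ℝ) + 1) * (f i : ℝ) * k)
      = ∑ j ∈ Finset.Icc 1 (f ⟨0, hL⟩),
          ((((Finset.univ.filter (fun i : Fin L => j ≤ f i)).card : ℝ)) ^ 2 / (-1 / k)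
            - (2 * (j : ℝ) - 1) * (((Finset.univ.filter (fun i : Fin L => j ≤ f i)).card : ℝ))
              * (-1 / k)) :=
  stmt_3_general L hL f hanti k
end

section
/- Let ψ₀ = ∏_{i<j} sin^β(x_i − x_j) and H_CS = −(1/2)∑_i ∂_i² + β(β−1) ∑_{i<j} 1/sin²(x_i − x_j). Then H_CS ψ₀ = E₀ ψ₀ with E₀ = (1/6) β² N(N+1)(N−1). -/
/-- Partial derivative in the `i`-th coordinate of a function of `N` real variables. -/
noncomputable def pd {N : ℕ} (i : Fin N) (f : (Fin N → ℝ) → ℝ) : (Fin N → ℝ) → ℝ :=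
  fun x => deriv (fun t => f (Function.update x i t)) (x i)

/-- The Calogero–Sutherland ground state `ψ₀ = ∏_{i<j} sin^β (x_i - x_j)`. -/
noncomputable def psi0 (N : ℕ) (β : ℝ) : (Fin N → ℝ) → ℝ :=
  fun x => ∏ p ∈ Finset.univ.filter (fun p : Fin N × Fin N => p.1 < p.2),
    Real.sin (x p.1 - x p.2) ^ β

/-!
Along the `i`-th coordinate line `∂ᵢ ψ₀ = β (∑_{j ≠ i} cot (xᵢ - xⱼ)) ψ₀`, hence
`∂ᵢ² ψ₀ / ψ₀ = -β ∑_{j ≠ i} csc² (xᵢ - xⱼ) + β² (∑_{j ≠ i} cot (xᵢ - xⱼ))²`.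
In the square, the diagonal terms are `cot² = csc² - 1`, and the cross terms, indexed by ordered
triples of distinct indices, group into cyclic triples, each summing to `-1` by the addition
formula for `cot`. The `csc²` terms then cancel against the potential, leaving a constant.
-/

open Finset Real Function Filter Topology

section PairSums

variable {ι : Type*} [Fintype ι] [LinearOrder ι]

theorem sum_sum_erase_eq_sum_lt_add_sum_lt_swap (f : ι → ι → ℝ) :
    ∑ i, ∑ j ∈ univ.erase i, f i j
      = ∑ p ∈ univ.filter (fun p : ι × ι => p.1 < p.2), f p.1 p.2
        + ∑ p ∈ univ.filter (fun p : ι × ι => p.1 < p.2), f p.2 p.1 := by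
  have hoff : ∑ i, ∑ j ∈ univ.erase i, f i j
      = ∑ p ∈ univ.filter (fun p : ι × ι => p.1 ≠ p.2), f p.1 p.2 := by
    rw [sum_filter, Fintype.sum_prod_type]
    simp_rw [← sum_filter, filter_ne]
  have hswap : ∑ p ∈ univ.filter (fun p : ι × ι => p.2 < p.1), f p.1 p.2
      = ∑ p ∈ univ.filter (fun p : ι × ι => p.1 < p.2), f p.2 p.1 :=
    sum_nbij' Prod.swap Prod.swap (by simp) (by simp) (by simp) (by simp) (by simp)
  rw [hoff, ← hswap, ← sum_filter_add_sum_filter_not _ (fun p : ι × ι => p.1 < p.2),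
    filter_filter, filter_filter]
  congr 2 <;> ext p <;> simp only [mem_filter, mem_univ, true_and]
  · exact ⟨fun h => h.2, fun h => ⟨h.ne, h⟩⟩
  · exact ⟨fun h => lt_of_le_of_ne (not_lt.1 h.2) h.1.symm, fun h => ⟨h.ne', not_lt.2 h.le⟩⟩

theorem sum_sum_erase_of_symm (f : ι → ι → ℝ) (hf : ∀ i j, f j i = f i j) :
    ∑ i, ∑ j ∈ univ.erase i, f i j
      = 2 * ∑ p ∈ univ.filter (fun p : ι × ι => p.1 < p.2), f p.1 p.2 := by
  simp_rw [sum_sum_erase_eq_sum_lt_add_sum_lt_swap, hf _ _, two_mul]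

theorem sum_lt_single_sub_single_mul_of_antisymm (i : ι) (g : ι → ι → ℝ)
    (hg : ∀ a b, g b a = -g a b) :
    ∑ p ∈ univ.filter (fun p : ι × ι => p.1 < p.2),
        ((Pi.single i 1 : ι → ℝ) p.1 - (Pi.single i 1 : ι → ℝ) p.2) * g p.1 p.2
      = ∑ j ∈ univ.erase i, g i j := by
  have h := sum_sum_erase_eq_sum_lt_add_sum_lt_swap fun a b => (Pi.single i 1 : ι → ℝ) a * g a b
  simp only [Pi.single_apply, ite_mul, one_mul, zero_mul, sum_ite_irrel, sum_const_zero,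
    sum_ite_eq', mem_univ, if_true] at h
  rw [h, ← sum_add_distrib]
  refine sum_congr rfl fun p _ => ?_
  rw [hg p.1 p.2]
  simp only [Pi.single_apply]
  split_ifs <;> ring

end PairSums

section TripleSums

variable {ι : Type*} [Fintype ι] [DecidableEq ι]

theorem sum_erase_erase_eq_sum_ite (F : ι → ι → ι → ℝ) :
    ∑ i, ∑ j ∈ univ.erase i, ∑ k ∈ (univ.erase i).erase j, F i j k
      = ∑ i, ∑ j, ∑ k, if i ≠ j ∧ i ≠ k ∧ j ≠ k then F i j k else 0 := by
  have hE : ∀ (s : Finset ι) (a : ι) (G : ι → ℝ),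
      ∑ k ∈ s.erase a, G k = ∑ k ∈ s, if a ≠ k then G k else 0 := fun s a G => by
    rw [← sum_filter, filter_ne]
  simp only [hE, ite_and, ite_sum_zero]

theorem sum_erase_erase_cycle (F : ι → ι → ι → ℝ) :
    ∑ i, ∑ j ∈ univ.erase i, ∑ k ∈ (univ.erase i).erase j, F i j k
      = ∑ i, ∑ j ∈ univ.erase i, ∑ k ∈ (univ.erase i).erase j, F j k i := by
  simp_rw [sum_erase_erase_eq_sum_ite]
  conv_rhs => rw [sum_comm]; enter [2, j]; rw [sum_comm]
  refine sum_congr rfl fun i _ => sum_congr rfl fun j _ => sum_congr rfl fun k _ => ?_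
  congr 1
  apply propext
  tauto

theorem sum_erase_erase_one :
    ∑ i : ι, ∑ j ∈ univ.erase i, ∑ _k ∈ (univ.erase i).erase j, (1 : ℝ)
      = Fintype.card ι * (Fintype.card ι - 1) * (Fintype.card ι - 2) := by
  have h : ∀ i : ι, ∀ j ∈ univ.erase i,
      ∑ _k ∈ (univ.erase i).erase j, (1 : ℝ) = Fintype.card ι - 2 := fun i j hj => by
    rw [sum_const, nsmul_one, cast_card_erase_of_mem hj, cast_card_erase_of_mem (mem_univ i),
      card_univ]
    ring
  rw [sum_congr rfl fun i _ => sum_congr rfl (h i)]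
  simp only [sum_const, nsmul_eq_mul, cast_card_erase_of_mem (mem_univ _), card_univ]
  ring

theorem sum_sq_sum_erase_of_cyclic (c : ι → ι → ℝ)
    (hc : ∀ i j k, i ≠ j → i ≠ k → j ≠ k → c i j * c i k + c j k * c j i + c k i * c k j = -1) :
    ∑ i, (∑ j ∈ univ.erase i, c i j) ^ 2
      = ∑ i, ∑ j ∈ univ.erase i, c i j ^ 2
        - Fintype.card ι * (Fintype.card ι - 1) * (Fintype.card ι - 2) / 3 := by
  have hsq : ∀ i, (∑ j ∈ univ.erase i, c i j) ^ 2 = ∑ j ∈ univ.erase i, c i j ^ 2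
      + ∑ j ∈ univ.erase i, ∑ k ∈ (univ.erase i).erase j, c i j * c i k := fun i => by
    rw [sq, sum_mul_sum, ← sum_add_distrib]
    refine sum_congr rfl fun j hj => ?_
    rw [← add_sum_erase _ _ hj, sq]
  set T := ∑ i, ∑ j ∈ univ.erase i, ∑ k ∈ (univ.erase i).erase j, c i j * c i k
  have hT : 3 * T = -(Fintype.card ι * (Fintype.card ι - 1) * (Fintype.card ι - 2)) := by
    have h1 := sum_erase_erase_cycle fun i j k => c i j * c i k
    have h2 := sum_erase_erase_cycle fun i j k => c j k * c j i
    calc 3 * T = ∑ i, ∑ j ∈ univ.erase i, ∑ k ∈ (univ.erase i).erase j,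
          (c i j * c i k + c j k * c j i + c k i * c k j) := by
            simp only [sum_add_distrib]; rw [← h1, ← h2, ← h1]; ring
      _ = ∑ i, ∑ j ∈ univ.erase i, ∑ _k ∈ (univ.erase i).erase j, (-1 : ℝ) := by
            refine sum_congr rfl fun i _ => sum_congr rfl fun j hj => sum_congr rfl fun k hk => ?_
            obtain ⟨hkj, hki⟩ := mem_erase.1 hk
            exact hc i j k (ne_of_mem_erase hj).symm (ne_of_mem_erase hki).symm hkj.symm
      _ = _ := by simp only [sum_neg_distrib, sum_erase_erase_one]
  simp only [hsq, sum_add_distrib]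
  linarith

end TripleSums

theorem Real.cot_neg (x : ℝ) : cot (-x) = -cot x := by
  simp only [cot_eq_cos_div_sin, cos_neg, sin_neg, div_neg]

theorem Real.hasDerivAt_cot {x : ℝ} (h : sin x ≠ 0) : HasDerivAt cot (-1 / sin x ^ 2) x := by
  have hcot : cot = fun t => cos t / sin t := funext fun t => cot_eq_cos_div_sin t
  rw [hcot]
  refine ((hasDerivAt_cos x).div (hasDerivAt_sin x) h).congr_deriv ?_
  rw [← sin_sq_add_cos_sq x]
  ring

/-- This also holds where `sin x < 0`, for Mathlib's branch of `x ^ β` on negative reals. -/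
theorem Real.hasDerivAt_sin_rpow {x : ℝ} (β : ℝ) (h : sin x ≠ 0) :
    HasDerivAt (fun t => sin t ^ β) (β * cot x * sin x ^ β) x := by
  refine ((hasDerivAt_rpow_const (p := β) (Or.inl h)).comp x (hasDerivAt_sin x)).congr_deriv ?_
  rw [rpow_sub_one h, cot_eq_cos_div_sin]
  field_simp

theorem Real.cot_sub_mul_cot_sub_cyclic {u v w : ℝ} (huv : sin (u - v) ≠ 0)
    (huw : sin (u - w) ≠ 0) (hvw : sin (v - w) ≠ 0) :
    cot (u - v) * cot (u - w) + cot (v - w) * cot (v - u) + cot (w - u) * cot (w - v) = -1 := by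
  have e : u - w = (u - v) + (v - w) := by ring
  rw [← neg_sub u v, ← neg_sub u w, ← neg_sub v w]
  simp only [cot_eq_cos_div_sin, sin_neg, cos_neg]
  rw [e] at huw ⊢
  field_simp
  rw [sin_add, cos_add]
  ring

theorem Real.cot_sq_eq_one_div_sin_sq_sub_one {x : ℝ} (h : sin x ≠ 0) :
    cot x ^ 2 = 1 / sin x ^ 2 - 1 := by
  rw [cot_eq_cos_div_sin, div_pow, cos_sq']
  field_simp

theorem HasDerivAt.fun_finsetProd_of_logDeriv {𝕜 ι : Type*} [NontriviallyNormedField 𝕜]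
    [DecidableEq ι] {s : Finset ι} {g : ι → 𝕜 → 𝕜} {r : ι → 𝕜} {t : 𝕜}
    (h : ∀ p ∈ s, HasDerivAt (g p) (r p * g p t) t) :
    HasDerivAt (fun u => ∏ p ∈ s, g p u) ((∑ p ∈ s, r p) * ∏ p ∈ s, g p t) t := by
  refine (HasDerivAt.fun_finsetProd h).congr_deriv ?_
  symm
  rw [sum_mul]
  refine sum_congr rfl fun p hp => ?_
  rw [smul_eq_mul, ← mul_prod_erase s _ hp]
  ring

def sinSeparated (ι : Type*) : Set (ι → ℝ) := {y | ∀ i j, i ≠ j → sin (y i - y j) ≠ 0}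

theorem isOpen_sinSeparated (ι : Type*) [Finite ι] : IsOpen (sinSeparated ι) := by
  simp only [sinSeparated, Set.ofPred_forall]
  exact isOpen_iInter_of_finite fun i => isOpen_iInter_of_finite fun j =>
    isOpen_iInter_of_finite fun _ => isOpen_ne_fun (by fun_prop) continuous_const

section CalogeroSutherland

variable {N : ℕ} (β : ℝ)

theorem hasDerivAt_psi0_update {y : Fin N → ℝ} (hy : y ∈ sinSeparated (Fin N)) (i : Fin N) :
    HasDerivAt (fun t => psi0 N β (update y i t))
      (β * (∑ j ∈ univ.erase i, cot (y i - y j)) * psi0 N β y) (y i) := by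
  have hfactor : ∀ p ∈ univ.filter (fun p : Fin N × Fin N => p.1 < p.2),
      HasDerivAt (fun t => sin (update y i t p.1 - update y i t p.2) ^ β)
        (((Pi.single i 1 : Fin N → ℝ) p.1 - (Pi.single i 1 : Fin N → ℝ) p.2)
          * (β * cot (y p.1 - y p.2))
          * sin (update y i (y i) p.1 - update y i (y i) p.2) ^ β) (y i) := by
    intro p hp
    rw [update_eq_self]
    have hline := (hasDerivAt_pi.1 (hasDerivAt_update y i (y i)) p.1).fun_sub
      (hasDerivAt_pi.1 (hasDerivAt_update y i (y i)) p.2)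
    have hcomp := (hasDerivAt_sin_rpow β (hy p.1 p.2 (mem_filter.1 hp).2.ne)).comp_of_eq (y i)
      hline (by rw [update_eq_self])
    exact hcomp.congr_deriv (by ring)
  have hcot := sum_lt_single_sub_single_mul_of_antisymm i (fun a b => cot (y a - y b))
    fun a b => by rw [← neg_sub, cot_neg]
  refine (HasDerivAt.fun_finsetProd_of_logDeriv hfactor).congr_deriv ?_
  rw [update_eq_self, ← hcot, mul_sum]
  congr 1
  exact sum_congr rfl fun p _ => by ring

theorem pd_psi0 {y : Fin N → ℝ} (hy : y ∈ sinSeparated (Fin N)) (i : Fin N) :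
    pd i (psi0 N β) y = β * (∑ j ∈ univ.erase i, cot (y i - y j)) * psi0 N β y :=
  (hasDerivAt_psi0_update β hy i).deriv

theorem pd_pd_psi0 {x : Fin N → ℝ} (hx : x ∈ sinSeparated (Fin N)) (i : Fin N) :
    pd i (pd i (psi0 N β)) x
      = (-β * ∑ j ∈ univ.erase i, 1 / sin (x i - x j) ^ 2
          + (β * ∑ j ∈ univ.erase i, cot (x i - x j)) ^ 2) * psi0 N β x := by
  have hnear : ∀ᶠ t in 𝓝 (x i), update x i t ∈ sinSeparated (Fin N) :=
    (hasDerivAt_update x i (x i)).continuousAt.preimage_mem_nhds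
      ((isOpen_sinSeparated (Fin N)).mem_nhds (by rwa [update_eq_self]))
  have hpd : (fun t => pd i (psi0 N β) (update x i t))
      =ᶠ[𝓝 (x i)] fun t => β * (∑ j ∈ univ.erase i, cot (t - x j)) * psi0 N β (update x i t) :=
    hnear.mono fun t ht => by
      dsimp only
      rw [pd_psi0 β ht, update_self]
      congr 2
      exact sum_congr rfl fun j hj => by rw [update_of_ne (ne_of_mem_erase hj)]
  have hcot : HasDerivAt (fun t => ∑ j ∈ univ.erase i, cot (t - x j))
      (∑ j ∈ univ.erase i, -1 / sin (x i - x j) ^ 2) (x i) :=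
    HasDerivAt.fun_sum fun j hj =>
      ((hasDerivAt_cot (hx i j (ne_of_mem_erase hj).symm)).comp_sub_const (x i) (x j))
  show deriv (fun t => pd i (psi0 N β) (update x i t)) (x i) = _
  rw [hpd.deriv_eq, ((hcot.const_mul β).fun_mul (hasDerivAt_psi0_update β hx i)).deriv,
    update_eq_self]
  simp only [neg_div, sum_neg_distrib]
  ring

theorem sum_pd_pd_psi0 {x : Fin N → ℝ} (hx : x ∈ sinSeparated (Fin N)) :
    ∑ i, pd i (pd i (psi0 N β)) x
      = (2 * β * (β - 1) * ∑ p ∈ univ.filter (fun p : Fin N × Fin N => p.1 < p.2),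
          1 / sin (x p.1 - x p.2) ^ 2 - β ^ 2 * N * (N - 1) * (N + 1) / 3) * psi0 N β x := by
  have hcsc := sum_sum_erase_of_symm (fun i j => 1 / sin (x i - x j) ^ 2)
    fun i j => by rw [← neg_sub, sin_neg, neg_sq]
  have hcot := sum_sq_sum_erase_of_cyclic (fun i j => cot (x i - x j))
    fun i j k hij hik hjk => cot_sub_mul_cot_sub_cyclic (hx i j hij) (hx i k hik) (hx j k hjk)
  have hcot_sq : ∑ i, ∑ j ∈ univ.erase i, cot (x i - x j) ^ 2
      = ∑ i, ∑ j ∈ univ.erase i, 1 / sin (x i - x j) ^ 2 - N * (N - 1) := by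
    calc _ = ∑ i, ∑ j ∈ univ.erase i, (1 / sin (x i - x j) ^ 2 - 1) :=
          sum_congr rfl fun i _ => sum_congr rfl fun j hj =>
            cot_sq_eq_one_div_sin_sq_sub_one (hx i j (ne_of_mem_erase hj).symm)
      _ = _ := by
          simp only [sum_sub_distrib, sum_const, nsmul_eq_mul, mul_one,
            cast_card_erase_of_mem (mem_univ _), card_univ, Fintype.card_fin]
          ring
  simp only [Fintype.card_fin] at hcot
  simp only [pd_pd_psi0 β hx, ← sum_mul, sum_add_distrib, ← mul_sum, mul_pow]
  rw [hcot, hcot_sq, hcsc]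
  ring

end CalogeroSutherland

theorem stmt_12 (N : ℕ) (β : ℝ) (x : Fin N → ℝ)
    (hx : ∀ i j : Fin N, i ≠ j → ∀ m : ℤ, x i - x j ≠ m * Real.pi) :
    -(1 / 2) * (∑ i : Fin N, pd i (pd i (psi0 N β)) x)
      + β * (β - 1) * (∑ p ∈ Finset.univ.filter (fun p : Fin N × Fin N => p.1 < p.2),
          (1 / Real.sin (x p.1 - x p.2) ^ 2)) * psi0 N β x
      = (1 / 6) * β ^ 2 * (N : ℝ) * ((N : ℝ) + 1) * ((N : ℝ) - 1) * psi0 N β x := by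
  have hsep : x ∈ sinSeparated (Fin N) := fun i j hij hsin => by
    obtain ⟨m, hm⟩ := sin_eq_zero_iff.1 hsin
    exact hx i j hij m hm.symm
  rw [sum_pd_pd_psi0 β hsep]
  ring
end

section
/- With the factorized Hamiltonian H = −(1/2) ∑_i (∂_i + ∂_i ln ∏_{l<j} sin^β x_{lj})(∂_i − ∂_i ln ∏_{l<j} sin^β x_{lj}), the expansion H = −(1/2)∑_i ∂_i² + β(β−1) ∑_{i<j} sin^{-2}(x_{ij}) − (1/6) β² N(N+1)(N−1) holds as an identity of differential operators (using the cotangent triple identity). -/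
/-- `w i x = ∂_i ln ∏_{l<j} sin^β x_{lj} = β ∑_{j ≠ i} cot (x_i - x_j)`. -/
noncomputable def w (N : ℕ) (β : ℝ) (i : Fin N) : (Fin N → ℝ) → ℝ :=
  fun x => β * ∑ j ∈ Finset.univ.filter (fun j : Fin N => j ≠ i), Real.cot (x i - x j)

open Finset Real Function

namespace Real

lemma cot_neg_s13 (x : ℝ) : cot (-x) = -cot x := by
  simp [cot_eq_cos_div_sin, div_neg]

lemma cot_sq {x : ℝ} (hx : sin x ≠ 0) : cot x ^ 2 = (sin x ^ 2)⁻¹ - 1 := by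
  rw [cot_eq_cos_div_sin, div_pow, cos_sq']
  field_simp

lemma hasDerivAt_cot_s13 {x : ℝ} (hx : sin x ≠ 0) : HasDerivAt cot (-(sin x ^ 2)⁻¹) x := by
  have h := (hasDerivAt_cos x).div (hasDerivAt_sin x) hx
  rw [show cos / sin = cot from funext fun y => (cot_eq_cos_div_sin y).symm] at h
  refine h.congr_deriv ?_
  rw [neg_mul, ← sq, ← sq, neg_sub_left, cos_sq_add_sin_sq, neg_div, one_div]

/-- The triple identity `cot A cot B + cot B cot C + cot C cot A = 1` for `A + B + C = 0`,
written for the differences of three points. -/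
lemma cot_sub_mul_cot_sub_cyclic_s13 {a b c : ℝ} (hab : sin (a - b) ≠ 0) (hbc : sin (b - c) ≠ 0)
    (hac : sin (a - c) ≠ 0) :
    cot (a - b) * cot (a - c) + cot (b - c) * cot (b - a) + cot (c - a) * cot (c - b) = -1 := by
  have e₁ : b - a = -(a - b) := by ring
  have e₂ : c - a = -(a - c) := by ring
  have e₃ : c - b = -(b - c) := by ring
  have e₄ : a - c = (a - b) + (b - c) := by ring
  rw [e₁, e₂, e₃, cot_neg_s13, cot_neg_s13, cot_neg_s13]
  rw [e₄] at hac ⊢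
  simp only [cot_eq_cos_div_sin]
  field_simp
  rw [sin_add, cos_add]
  ring

end Real

section Combinatorics

variable {ι : Type*} [DecidableEq ι]

lemma sq_sum_eq_sum_sq_add_sum_sum_erase {R : Type*} [CommSemiring R] (s : Finset ι)
    (a : ι → R) :
    (∑ j ∈ s, a j) ^ 2 = ∑ j ∈ s, a j ^ 2 + ∑ j ∈ s, ∑ k ∈ s.erase j, a j * a k := by
  rw [sq, sum_mul_sum, ← sum_add_distrib]
  refine sum_congr rfl fun j hj => ?_
  rw [← add_sum_erase s _ hj, sq]

variable [Fintype ι]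

variable (ι) in
def distinctTriples : Finset (ι × ι × ι) :=
  univ.filter fun p => p.1 ≠ p.2.1 ∧ p.1 ≠ p.2.2 ∧ p.2.1 ≠ p.2.2

lemma sum_distinctTriples {M : Type*} [AddCommMonoid M] (G : ι → ι → ι → M) :
    ∑ p ∈ distinctTriples ι, G p.1 p.2.1 p.2.2
      = ∑ i, ∑ j ∈ univ.erase i, ∑ k ∈ (univ.erase i).erase j, G i j k := by
  rw [sum_finset_product _ univ
    (fun i => univ.filter fun q : ι × ι => i ≠ q.1 ∧ i ≠ q.2 ∧ q.1 ≠ q.2)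
    (by simp [distinctTriples])]
  refine sum_congr rfl fun i _ => ?_
  rw [sum_finset_product _ (univ.erase i) (fun j => (univ.erase i).erase j)]
  intro q
  simp only [mem_filter, mem_univ, mem_erase]
  tauto

lemma sum_distinctTriples_rotate {M : Type*} [AddCommMonoid M] (G : ι → ι → ι → M) :
    ∑ p ∈ distinctTriples ι, G p.1 p.2.1 p.2.2 = ∑ p ∈ distinctTriples ι, G p.2.1 p.2.2 p.1 :=
  sum_nbij' (fun p => (p.2.2, p.1, p.2.1)) (fun p => (p.2.1, p.2.2, p.1))
    (by simp [distinctTriples]; tauto) (by simp [distinctTriples]; tauto)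
    (fun _ _ => rfl) (fun _ _ => rfl) (fun _ _ => rfl)

lemma three_mul_sum_distinct_triples {R : Type*} [CommRing R] (G : ι → ι → ι → R) (c : R)
    (hG : ∀ i j k, i ≠ j → i ≠ k → j ≠ k → G i j k + G j k i + G k i j = c) :
    3 * ∑ i, ∑ j ∈ univ.erase i, ∑ k ∈ (univ.erase i).erase j, G i j k
      = c * Fintype.card ι * (Fintype.card ι - 1) * (Fintype.card ι - 2) := by
  have hcyc : ∑ p ∈ distinctTriples ι,
      (G p.1 p.2.1 p.2.2 + G p.2.1 p.2.2 p.1 + G p.2.2 p.1 p.2.1) = ∑ p ∈ distinctTriples ι, c :=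
    sum_congr rfl fun p hp => by
      simp only [distinctTriples, mem_filter, mem_univ, true_and] at hp
      exact hG _ _ _ hp.1 hp.2.1 hp.2.2
  have hrot₁ : ∑ p ∈ distinctTriples ι, G p.2.1 p.2.2 p.1
      = ∑ p ∈ distinctTriples ι, G p.1 p.2.1 p.2.2 :=
    (sum_distinctTriples_rotate G).symm
  have hrot₂ : ∑ p ∈ distinctTriples ι, G p.2.2 p.1 p.2.1
      = ∑ p ∈ distinctTriples ι, G p.1 p.2.1 p.2.2 :=
    sum_distinctTriples_rotate fun i j k => G k i j
  rw [sum_add_distrib, sum_add_distrib, hrot₁, hrot₂, sum_distinctTriples,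
    sum_distinctTriples (fun _ _ _ => c)] at hcyc
  have hcard : ∀ i : ι, ∀ j ∈ univ.erase i,
      (#((univ.erase i).erase j) : R) = Fintype.card ι - 2 := fun i j hj => by
    rw [cast_card_erase_of_mem hj, cast_card_erase_of_mem (mem_univ i), card_univ]
    ring
  rw [← two_add_one_eq_three, add_mul, two_mul, one_mul, hcyc]
  simp only [sum_const, nsmul_eq_mul]
  rw [sum_congr rfl fun i _ => sum_congr rfl fun j hj => by rw [hcard i j hj]]
  simp only [sum_const, nsmul_eq_mul, cast_card_erase_of_mem (mem_univ _), card_univ]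
  ring

lemma sum_sq_sum_cot_sub (x : ι → ℝ) (hx : ∀ i j, i ≠ j → sin (x i - x j) ≠ 0) :
    ∑ i, (∑ j ∈ univ.erase i, cot (x i - x j)) ^ 2
      = ∑ i, ∑ j ∈ univ.erase i, (sin (x i - x j) ^ 2)⁻¹
        - Fintype.card ι * (Fintype.card ι - 1) * (Fintype.card ι + 1) / 3 := by
  have htriple := three_mul_sum_distinct_triples (fun i j k => cot (x i - x j) * cot (x i - x k))
    (-1) fun i j k hij hik hjk => cot_sub_mul_cot_sub_cyclic_s13 (hx i j hij) (hx j k hjk) (hx i k hik)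
  have hdiag : ∀ i, ∑ j ∈ univ.erase i, cot (x i - x j) ^ 2
      = ∑ j ∈ univ.erase i, (sin (x i - x j) ^ 2)⁻¹ - (Fintype.card ι - 1) := fun i => by
    rw [sum_congr rfl fun j hj => cot_sq (hx i j (ne_of_mem_erase hj).symm), sum_sub_distrib,
      sum_const, nsmul_one, cast_card_erase_of_mem (mem_univ i), card_univ]
  simp only [sq_sum_eq_sum_sq_add_sum_sum_erase, sum_add_distrib, hdiag, sum_sub_distrib,
    sum_const, card_univ, nsmul_eq_mul]
  linear_combination htriple / 3

end Combinatorics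

lemma sum_sum_erase_eq_two_mul_sum_lt {ι R : Type*} [Fintype ι] [LinearOrder ι]
    [CommSemiring R] (u : ι → ι → R) (hu : ∀ i j, u i j = u j i) :
    ∑ i, ∑ j ∈ univ.erase i, u i j
      = 2 * ∑ p ∈ univ.filter (fun p : ι × ι => p.1 < p.2), u p.1 p.2 := by
  have hswap : ∑ p ∈ univ.filter (fun p : ι × ι => p.1 < p.2), u p.1 p.2
      = ∑ p ∈ univ.filter (fun p : ι × ι => p.2 < p.1), u p.1 p.2 :=
    sum_equiv (Equiv.prodComm ι ι) (by simp) fun p _ => hu _ _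
  rw [two_mul]
  nth_rw 2 [hswap]
  rw [sum_filter, sum_filter, ← sum_add_distrib, Fintype.sum_prod_type]
  refine sum_congr rfl fun i _ => ?_
  rw [← filter_ne', sum_filter]
  refine sum_congr rfl fun j _ => ?_
  rcases lt_trichotomy i j with h | rfl | h
  · simp [h, h.ne', h.not_gt]
  · simp
  · simp [h, h.ne, h.not_gt]

section PartialDerivative

variable {N : ℕ} {i : Fin N}

lemma pd_update_self (f : (Fin N → ℝ) → ℝ) (x : Fin N → ℝ) (t : ℝ) :
    pd i f (update x i t) = deriv (fun s => f (update x i s)) t := by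
  simp only [pd, update_self, update_idem]

lemma pd_pd_eq_deriv_deriv (f : (Fin N → ℝ) → ℝ) (x : Fin N → ℝ) :
    pd i (pd i f) x = deriv (deriv fun t => f (update x i t)) (x i) := by
  simp only [pd, update_self, update_idem]

lemma pd_factorization {f W : (Fin N → ℝ) → ℝ} {x : Fin N → ℝ} (hf : ContDiff ℝ 2 f)
    (hW : DifferentiableAt ℝ (fun t => W (update x i t)) (x i)) :
    pd i (fun y => pd i f y - W y * f y) x + W x * (pd i f x - W x * f x)
      = pd i (pd i f) x - (pd i W x + W x ^ 2) * f x := by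
  set g : ℝ → ℝ := fun t => f (update x i t)
  have hg : ContDiff ℝ 2 g := hf.comp (contDiff_update 2 x i)
  have hg' : HasDerivAt (deriv g) (pd i (pd i f) x) (x i) := by
    rw [pd_pd_eq_deriv_deriv]
    exact (hg.differentiable_deriv_two _).hasDerivAt
  have hd := hg'.fun_sub (hW.hasDerivAt.fun_mul (hg.differentiable two_ne_zero _).hasDerivAt)
  have hline : (fun t => pd i f (update x i t) - W (update x i t) * f (update x i t))
      = fun t => deriv g t - W (update x i t) * g t := by
    simp only [pd_update_self]; rfl
  rw [pd, hline, hd.deriv]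
  simp only [pd, update_eq_self, g]
  ring

end PartialDerivative

section CotangentPotential

variable {N : ℕ} {β : ℝ} {i : Fin N} {x : Fin N → ℝ}

lemma w_apply : w N β i x = β * ∑ j ∈ univ.erase i, cot (x i - x j) := by
  simp only [w, filter_ne']

lemma hasDerivAt_w_update (hx : ∀ j, j ≠ i → sin (x i - x j) ≠ 0) :
    HasDerivAt (fun t => w N β i (update x i t))
      (β * ∑ j ∈ univ.erase i, -(sin (x i - x j) ^ 2)⁻¹) (x i) := by
  have hline : (fun t => w N β i (update x i t))
      = fun t => β * ∑ j ∈ univ.erase i, cot (t - x j) := by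
    funext t
    rw [w_apply, update_self]
    congr 1
    exact sum_congr rfl fun j hj => by rw [update_of_ne (ne_of_mem_erase hj)]
  rw [hline]
  refine (HasDerivAt.fun_sum fun j hj => ?_).const_mul β
  exact (hasDerivAt_cot_s13 (hx j (ne_of_mem_erase hj))).comp_sub_const (x i) (x j)

lemma pd_w (hx : ∀ j, j ≠ i → sin (x i - x j) ≠ 0) :
    pd i (w N β i) x = -β * ∑ j ∈ univ.erase i, (sin (x i - x j) ^ 2)⁻¹ := by
  rw [pd, (hasDerivAt_w_update hx).deriv, sum_neg_distrib, mul_neg, neg_mul]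

lemma sum_pd_w_add_sq (hx : ∀ i j : Fin N, i ≠ j → sin (x i - x j) ≠ 0) :
    ∑ i, (pd i (w N β i) x + w N β i x ^ 2)
      = 2 * β * (β - 1) * ∑ p ∈ univ.filter (fun p : Fin N × Fin N => p.1 < p.2),
          (sin (x p.1 - x p.2) ^ 2)⁻¹ - β ^ 2 * N * (N + 1) * (N - 1) / 3 := by
  have hsymm : ∀ i j : Fin N, (sin (x i - x j) ^ 2)⁻¹ = (sin (x j - x i) ^ 2)⁻¹ := fun i j => by
    rw [← neg_sub, sin_neg, neg_sq]
  rw [sum_congr rfl fun i _ => by rw [pd_w fun j hji => hx i j hji.symm, w_apply, mul_pow]]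
  simp only [sum_add_distrib, ← mul_sum, sum_sq_sum_cot_sub x hx,
    sum_sum_erase_eq_two_mul_sum_lt _ hsymm, Fintype.card_fin]
  ring

end CotangentPotential

theorem stmt_13 (N : ℕ) (β : ℝ) (f : (Fin N → ℝ) → ℝ) (hf : ContDiff ℝ 2 f)
    (x : Fin N → ℝ)
    (hx : ∀ i j : Fin N, i ≠ j → ∀ m : ℤ, x i - x j ≠ m * Real.pi) :
    -(1 / 2) * (∑ i : Fin N,
        (pd i (fun y => pd i f y - w N β i y * f y) x
          + w N β i x * (pd i f x - w N β i x * f x)))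
      = -(1 / 2) * (∑ i : Fin N, pd i (pd i f) x)
        + β * (β - 1) * (∑ p ∈ Finset.univ.filter (fun p : Fin N × Fin N => p.1 < p.2),
            f x / Real.sin (x p.1 - x p.2) ^ 2)
        - (1 / 6) * β ^ 2 * (N : ℝ) * ((N : ℝ) + 1) * ((N : ℝ) - 1) * f x := by
  have hs : ∀ i j : Fin N, i ≠ j → sin (x i - x j) ≠ 0 := fun i j hij =>
    sin_ne_zero_iff.2 fun m h => hx i j hij m h.symm
  rw [sum_congr rfl fun i _ =>
      pd_factorization hf (hasDerivAt_w_update fun j hji => hs i j hji.symm).differentiableAt,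
    sum_sub_distrib, ← sum_mul, sum_pd_w_add_sq hs]
  simp only [div_eq_mul_inv, ← mul_sum]
  ring
end
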